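/- Let B be a finite-dimensional C*-algebra, let H be a Hilbert C*-module over B, and let K be a closed B-submodule of H that is finitely or countably generated (i.e. K has a dense B-submodule generated by a finite or countable set). Then K is complemented in H: there exists a B-linear map P : H → H with ‖Ph‖ ≤ ‖h‖ for all h ∈ H, P ∘ P = P, ⟨Px, y⟩ = ⟨x, Py⟩ for all x, y ∈ H, and range P = K. -/

import Mathlib

open scoped ComplexOrder RightActions InnerProductSpace

/-- The December 2024 Mathlib `CStarModule`: a *right* Hilbert C⋆-module (action of `Aᵐᵒᵖ`),
with `⟪x, y <• a⟫ = ⟪x, y⟫ * a`. Current Mathlib's `CStarModule` is a left module instead. -/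
class CStarModuleRight (A E : Type*) [NonUnitalSemiring A] [StarRing A] [Module ℂ A]
    [AddCommGroup E] [Module ℂ E] [PartialOrder A] [SMul Aᵐᵒᵖ E] [Norm A] [Norm E]
    extends Inner A E where
  inner_add_right {x} {y} {z} : inner x (y + z) = inner x y + inner x z
  inner_self_nonneg {x} : 0 ≤ inner x x
  inner_self {x} : inner x x = 0 ↔ x = 0
  inner_op_smul_right {a : A} {x y : E} : inner x (y <• a) = inner x y * a
  inner_smul_right_complex {z : ℂ} {x} {y} : inner x (z • y) = z • inner x y
  star_inner x y : star (inner x y) = inner y x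
  norm_eq_sqrt_norm_inner_self x : ‖x‖ = √‖inner x x‖


namespace CStarModuleRight

section general

variable {A E : Type*} [NonUnitalRing A] [StarRing A] [AddCommGroup E] [Module ℂ A]
  [Module ℂ E] [PartialOrder A] [SMul Aᵐᵒᵖ E] [Norm A] [Norm E] [CStarModuleRight A E]

local notation "⟪" x ", " y "⟫" => inner A x y

lemma inner_add_left {x y z : E} : ⟪x + y, z⟫ = ⟪x, z⟫ + ⟪y, z⟫ := by
  rw [← star_star (r := ⟪x + y, z⟫)]
  simp only [inner_add_right, star_add, star_inner]

lemma inner_op_smul_left {a : A} {x y : E} : ⟪x <• a, y⟫ = star a * ⟪x, y⟫ := by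
  rw [← star_inner, inner_op_smul_right, star_mul, star_inner]

variable [StarModule ℂ A]

lemma inner_smul_left_complex {z : ℂ} {x y : E} : ⟪z • x, y⟫ = star z • ⟪x, y⟫ := by
  rw [← star_inner, inner_smul_right_complex, star_smul, star_inner]

lemma inner_smul_left_real {z : ℝ} {x y : E} : ⟪z • x, y⟫ = z • ⟪x, y⟫ := by
  have h₁ : z • x = (z : ℂ) • x := by simp
  rw [h₁, inner_smul_left_complex]
  simp

lemma inner_smul_right_real {z : ℝ} {x y : E} : ⟪x, z • y⟫ = z • ⟪x, y⟫ := by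
  have h₁ : z • y = (z : ℂ) • y := by simp
  rw [h₁, inner_smul_right_complex]
  simp

lemma inner_zero_right {x : E} : ⟪x, 0⟫ = 0 := by
  have h := inner_add_right (A := A) (x := x) (y := (0 : E)) (z := 0)
  simpa using h

lemma inner_neg_right {x y : E} : ⟪x, -y⟫ = -⟪x, y⟫ := by
  have h := inner_add_right (A := A) (x := x) (y := y) (z := -y)
  rw [add_neg_cancel, inner_zero_right] at h
  exact (neg_eq_of_add_eq_zero_right h.symm).symm

lemma inner_sub_right {x y z : E} : ⟪x, y - z⟫ = ⟪x, y⟫ - ⟪x, z⟫ := by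
  rw [sub_eq_add_neg, inner_add_right, inner_neg_right, ← sub_eq_add_neg]

lemma inner_sub_left {x y z : E} : ⟪x - y, z⟫ = ⟪x, z⟫ - ⟪y, z⟫ := by
  rw [← star_inner, inner_sub_right, star_sub, star_inner, star_inner]

end general

section norm

variable {A E : Type*} [NonUnitalCStarAlgebra A] [PartialOrder A] [NormedAddCommGroup E]
  [NormedSpace ℂ E] [SMul Aᵐᵒᵖ E] [CStarModuleRight A E]

local notation "⟪" x ", " y "⟫" => inner A x y

lemma norm_sq_eq {x : E} : ‖x‖ ^ 2 = ‖⟪x, x⟫‖ := by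
  simp [norm_eq_sqrt_norm_inner_self (A := A)]

variable [StarOrderedRing A]

lemma inner_mul_inner_swap_le {x y : E} : ⟪y, x⟫ * ⟪x, y⟫ ≤ ‖x‖ ^ 2 • ⟪y, y⟫ := by
  rcases eq_or_ne x 0 with h | h
  · have h0 : ⟪y, x⟫ = 0 := by rw [h, inner_zero_right]
    rw [h0, zero_mul, h, norm_zero]
    simp
  · have h₁ : ∀ (a : A),
        (0 : A) ≤ ‖x‖ ^ 2 • (star a * a) - ‖x‖ ^ 2 • (⟪y, x⟫ * a)
                  - ‖x‖ ^ 2 • (star a * ⟪x, y⟫) + ‖x‖ ^ 2 • (‖x‖ ^ 2 • ⟪y, y⟫) := fun a => by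
      calc (0 : A) ≤ ⟪x <• a - ‖x‖ ^ 2 • y, x <• a - ‖x‖ ^ 2 • y⟫ := by exact inner_self_nonneg
            _ = star a * ⟪x, x⟫ * a - ‖x‖ ^ 2 • (⟪y, x⟫ * a)
                  - ‖x‖ ^ 2 • (star a * ⟪x, y⟫) + ‖x‖ ^ 2 • (‖x‖ ^ 2 • ⟪y, y⟫) := by
                      simp only [inner_sub_right, inner_op_smul_right, inner_sub_left,
                        inner_op_smul_left, inner_smul_left_real, mul_sub, sub_mul, smul_mul_assoc,
                        inner_smul_right_real, smul_sub, mul_assoc]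
                      abel
            _ ≤ ‖x‖ ^ 2 • (star a * a) - ‖x‖ ^ 2 • (⟪y, x⟫ * a)
                  - ‖x‖ ^ 2 • (star a * ⟪x, y⟫) + ‖x‖ ^ 2 • (‖x‖ ^ 2 • ⟪y, y⟫) := by
                      gcongr
                      calc _ ≤ ‖⟪x, x⟫‖ • (star a * a) :=
                          CStarAlgebra.star_left_conjugate_le_norm_smul (hb := star_inner x x)
                        _ = (√‖⟪x, x⟫‖) ^ 2 • (star a * a) := by
                          rw [Real.sq_sqrt]
                          positivity
                        _ = ‖x‖ ^ 2 • (star a * a) := by rw [← norm_eq_sqrt_norm_inner_self]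
    specialize h₁ ⟪x, y⟫
    simp only [star_inner, sub_self, zero_sub, le_neg_add_iff_add_le, add_zero] at h₁
    rwa [smul_le_smul_iff_of_pos_left (pow_pos (norm_pos_iff.mpr h) _)] at h₁

variable (E) in
lemma norm_inner_le {x y : E} : ‖⟪x, y⟫‖ ≤ ‖x‖ * ‖y‖ := by
  have := calc ‖⟪x, y⟫‖ ^ 2 = ‖⟪y, x⟫ * ⟪x, y⟫‖ := by
                rw [← star_inner x, CStarRing.norm_star_mul_self, pow_two]
    _ ≤ ‖‖x‖ ^ 2 • ⟪y, y⟫‖ := by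
                refine CStarAlgebra.norm_le_norm_of_nonneg_of_le ?_ inner_mul_inner_swap_le
                rw [← star_inner x]
                exact star_mul_self_nonneg ⟪x, y⟫
    _ = ‖x‖ ^ 2 * ‖⟪y, y⟫‖ := by simp [norm_smul]
    _ = ‖x‖ ^ 2 * ‖y‖ ^ 2 := by
                simp only [norm_eq_sqrt_norm_inner_self (A := A), norm_nonneg, Real.sq_sqrt]
    _ = (‖x‖ * ‖y‖) ^ 2 := by simp only [mul_pow]
  refine (pow_le_pow_iff_left₀ (norm_nonneg ⟪x, y⟫) ?_ (by simp)).mp this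
  exact mul_nonneg (norm_nonneg _) (norm_nonneg _)

end norm

end CStarModuleRight

noncomputable section
set_option linter.unusedSectionVars false
set_option linter.unusedVariables false
set_option maxHeartbeats 1000000

section TraceFunctional

variable {B : Type*} [CStarAlgebra B] [PartialOrder B] [StarOrderedRing B]
  [FiniteDimensional ℂ B]

/-- The trace of left multiplication, a faithful positive functional on a
finite-dimensional C*-algebra. -/
noncomputable def traceForm : B →ₗ[ℂ] ℂ :=
  (LinearMap.trace ℂ B).comp (Algebra.lmul ℂ B).toLinearMap

lemma root_charpoly_mem_spectrum (b : B) {μ : ℂ}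
    (hμ : μ ∈ (LinearMap.charpoly (Algebra.lmul ℂ B b)).roots) : μ ∈ spectrum ℂ b := by
  set f := Algebra.lmul ℂ B b with hf
  have hroot : (LinearMap.charpoly f).IsRoot μ := (Polynomial.mem_roots'.mp hμ).2
  -- translate to matrices
  set cb := Module.Free.chooseBasis ℂ B
  set M := LinearMap.toMatrix cb cb f with hM
  have hchar : LinearMap.charpoly f = M.charpoly := LinearMap.charpoly_def f
  have hdet : (μ • (1 : Matrix _ _ ℂ) - M).det = 0 := by
    have := hroot
    rw [hchar] at this
    have h1 : Polynomial.eval μ M.charpoly = (μ • (1 : Matrix _ _ ℂ) - M).det := by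
      rw [Matrix.charpoly, ← Polynomial.coe_evalRingHom, RingHom.map_det]
      congr 1
      ext i j
      by_cases h : i = j <;>
        simp [h, Matrix.charmatrix, Matrix.one_apply, Matrix.smul_apply]
    rw [← h1]; exact this
  -- μ ∈ spectrum of f
  have hmemf : μ ∈ spectrum ℂ f := by
    rw [spectrum.mem_iff]
    intro hunit
    have hdet' : LinearMap.det (algebraMap ℂ (Module.End ℂ B) μ - f) = 0 := by
      rw [← LinearMap.det_toMatrix cb]
      have : LinearMap.toMatrix cb cb (algebraMap ℂ (Module.End ℂ B) μ - f)
          = μ • (1 : Matrix _ _ ℂ) - M := by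
        rw [map_sub]
        congr 1
        rw [Module.algebraMap_end_eq_smul_id, map_smul, LinearMap.toMatrix_id]
      rw [this, hdet]
    have := hunit.map LinearMap.det
    rw [hdet'] at this
    exact not_isUnit_zero this
  exact AlgHom.spectrum_apply_subset (Algebra.lmul ℂ B) b hmemf

lemma traceForm_eq_sum_roots (b : B) :
    traceForm b = (LinearMap.charpoly (Algebra.lmul ℂ B b)).roots.sum := by
  set f := Algebra.lmul ℂ B b
  set cb := Module.Free.chooseBasis ℂ B
  have h1 : traceForm b = Matrix.trace (LinearMap.toMatrix cb cb f) :=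
    LinearMap.trace_eq_matrix_trace ℂ cb f
  rw [h1, Matrix.trace_eq_sum_roots_charpoly, LinearMap.charpoly_def]

lemma traceForm_nonneg {b : B} (hb : 0 ≤ b) : 0 ≤ traceForm b := by
  rw [traceForm_eq_sum_roots]
  refine Multiset.sum_nonneg fun μ hμ => ?_
  exact spectrum_nonneg_of_nonneg hb (root_charpoly_mem_spectrum b hμ)

lemma conj_traceForm {b : B} (hb : IsSelfAdjoint b) :
    (starRingEnd ℂ) (traceForm b) = traceForm b := by
  rw [traceForm_eq_sum_roots, map_multiset_sum]
  congr 1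
  rw [Multiset.map_congr rfl fun μ hμ => ?_, Multiset.map_id]
  have := hb.mem_spectrum_eq_re (root_charpoly_mem_spectrum b hμ)
  rw [id, this, Complex.conj_ofReal]

lemma traceForm_star (b : B) : traceForm (star b) = (starRingEnd ℂ) (traceForm b) := by
  have hs : IsSelfAdjoint (b + star b) := by
    rw [IsSelfAdjoint, star_add, star_star, add_comm]
  have ht : IsSelfAdjoint (Complex.I • (b - star b)) := by
    rw [IsSelfAdjoint, star_smul, star_sub, star_star, Complex.star_def, Complex.conj_I,
      neg_smul, ← smul_neg, neg_sub]
  have h1 := conj_traceForm hs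
  have h2 := conj_traceForm ht
  rw [map_add, map_add] at h1
  rw [map_smul, map_sub, smul_eq_mul, map_mul, map_sub, Complex.conj_I] at h2
  set x := traceForm b
  set y := traceForm (star b)
  simp only [Complex.ext_iff, Complex.add_re, Complex.add_im, Complex.mul_re, Complex.mul_im,
    Complex.conj_re, Complex.conj_im, Complex.sub_re, Complex.sub_im, Complex.neg_re,
    Complex.neg_im, Complex.I_re, Complex.I_im] at h1 h2 ⊢
  obtain ⟨h1a, h1b⟩ := h1
  obtain ⟨h2a, h2b⟩ := h2
  constructor <;> linarith
lemma traceForm_eq_zero_iff {b : B} (hb : 0 ≤ b) : traceForm b = 0 ↔ b = 0 := by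
  refine ⟨fun h => ?_, fun h => by simp [h]⟩
  set f := Algebra.lmul ℂ B b with hf
  have hnonneg : ∀ μ ∈ (LinearMap.charpoly f).roots, 0 ≤ μ :=
    fun μ hμ => spectrum_nonneg_of_nonneg hb (root_charpoly_mem_spectrum b hμ)
  have hsum : (LinearMap.charpoly f).roots.sum = 0 := by
    rw [← traceForm_eq_sum_roots, h]
  have hzero : ∀ μ ∈ (LinearMap.charpoly f).roots, μ = 0 := by
    intro μ hμ
    refine le_antisymm ?_ (hnonneg μ hμ)
    calc μ ≤ (LinearMap.charpoly f).roots.sum := Multiset.single_le_sum hnonneg μ hμ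
    _ = 0 := hsum
  -- charpoly = X ^ finrank
  have hmonic : (LinearMap.charpoly f).Monic := LinearMap.charpoly_monic f
  have hsplits : (LinearMap.charpoly f).Splits := IsAlgClosed.splits _
  have hcard : (LinearMap.charpoly f).roots.card = (LinearMap.charpoly f).natDegree :=
    (Polynomial.splits_iff_card_roots).mp hsplits
  have hchar : LinearMap.charpoly f = Polynomial.X ^ Module.finrank ℂ B := by
    have := hsplits.eq_prod_roots_of_monic hmonic
    rw [show Multiset.map (fun a => Polynomial.X - Polynomial.C a) (LinearMap.charpoly f).roots
        = Multiset.map (fun _ => Polynomial.X) (LinearMap.charpoly f).roots from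
      Multiset.map_congr rfl (fun μ hμ => by rw [hzero μ hμ, map_zero, sub_zero])] at this
    rw [Multiset.map_const', Multiset.prod_replicate] at this
    rw [this, hcard, LinearMap.charpoly_natDegree]
  have hnil : IsNilpotent f := (LinearMap.isNilpotent_iff_charpoly f).mpr hchar
  obtain ⟨n, hn⟩ := hnil
  have hbn : b ^ n = 0 := by
    have : f ^ n = Algebra.lmul ℂ B (b ^ n) := by rw [map_pow]
    rw [this] at hn
    have := congrArg (fun g : Module.End ℂ B => g 1) hn
    simpa using this
  -- b is selfadjoint and nilpotent, hence 0
  have hsa : IsSelfAdjoint b := IsSelfAdjoint.of_nonneg hb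
  have hnorm : ‖b‖ = 0 := by
    obtain ⟨k, hk⟩ : ∃ k : ℕ, n ≤ 2 ^ k := ⟨n, Nat.le_of_lt (Nat.lt_two_pow_self (n := n))⟩
    have hb2k : b ^ 2 ^ k = 0 := by
      calc b ^ 2 ^ k = b ^ n * b ^ (2 ^ k - n) := by rw [← pow_add]; congr 1; omega
      _ = 0 := by rw [hbn, zero_mul]
    have := hsa.nnnorm_pow_two_pow k
    rw [hb2k] at this
    simp only [nnnorm_zero] at this
    have h2 : ‖b‖₊ ^ 2 ^ k = 0 := this.symm
    rw [pow_eq_zero_iff (by positivity)] at h2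
    simpa using congrArg NNReal.toReal h2
  rwa [norm_eq_zero] at hnorm

lemma traceForm_upper : ∃ C : ℝ, 0 < C ∧ ∀ b : B, ‖traceForm b‖ ≤ C * ‖b‖ := by
  refine ⟨‖(traceForm (B := B)).toContinuousLinearMap‖ + 1, by positivity, fun b => ?_⟩
  calc ‖traceForm b‖ = ‖(traceForm (B := B)).toContinuousLinearMap b‖ := by
        rw [LinearMap.coe_toContinuousLinearMap']
    _ ≤ ‖(traceForm (B := B)).toContinuousLinearMap‖ * ‖b‖ :=
        ContinuousLinearMap.le_opNorm _ b
    _ ≤ _ := by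
        have := norm_nonneg b
        nlinarith [norm_nonneg (traceForm (B := B)).toContinuousLinearMap]

lemma traceForm_lower : ∃ c : ℝ, 0 < c ∧ ∀ b : B, 0 ≤ b → c * ‖b‖ ≤ (traceForm b).re := by
  set S : Set B := {b | 0 ≤ b ∧ ‖b‖ = 1} with hS
  by_cases hne : S.Nonempty
  · have hclosed : IsClosed S := by
      have hrw : S = {b : B | 0 ≤ b} ∩ {b : B | ‖b‖ = 1} := rfl
      rw [hrw]
      exact CStarAlgebra.isClosed_nonneg.inter (isClosed_eq continuous_norm continuous_const)
    have hbdd : Bornology.IsBounded S := by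
      refine (Metric.isBounded_closedBall (x := (0 : B)) (r := 1)).subset fun b hb => ?_
      rw [Metric.mem_closedBall, dist_zero_right, hb.2]
    have hcompact : IsCompact S := Metric.isCompact_of_isClosed_isBounded hclosed hbdd
    have hcont : ContinuousOn (fun b : B => (traceForm b).re) S := by
      have : Continuous (fun b : B => (traceForm b).re) :=
        Complex.continuous_re.comp (traceForm (B := B)).toContinuousLinearMap.continuous
      exact this.continuousOn
    obtain ⟨m, hmS, hmin⟩ := hcompact.exists_isMinOn hne hcont
    have hm0 : m ≠ 0 := by
      intro h
      have := hmS.2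
      rw [h, norm_zero] at this
      exact one_ne_zero this.symm
    have hmpos : 0 < (traceForm m).re := by
      have h1 : 0 ≤ traceForm m := traceForm_nonneg hmS.1
      have h2 : traceForm m ≠ 0 := fun h => hm0 ((traceForm_eq_zero_iff hmS.1).mp h)
      have h3 := Complex.le_def.mp h1
      have hre : 0 ≤ (traceForm m).re := by simpa using h3.1
      have him : (traceForm m).im = 0 := by simpa using h3.2.symm
      rcases lt_or_eq_of_le hre with h | h
      · exact h
      · exact absurd (Complex.ext h.symm (by simpa using him)) h2
    refine ⟨(traceForm m).re, hmpos, fun b hb => ?_⟩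
    rcases eq_or_ne b 0 with rfl | hbne
    · simp
    · have hnb : 0 < ‖b‖ := norm_pos_iff.mpr hbne
      have hmem : ‖b‖⁻¹ • b ∈ S := by
        refine ⟨smul_nonneg (by positivity) hb, ?_⟩
        rw [norm_smul]
        simp [hnb.ne']
      have := hmin hmem
      have htr : traceForm (‖b‖⁻¹ • b) = (‖b‖⁻¹ : ℂ) • traceForm b := by
        rw [← map_smul]
        congr 1
        rw [← algebraMap_smul ℂ (‖b‖⁻¹ : ℝ) b]
        norm_num
      rw [IsMinOn, IsMinFilter] at hmin
      have hle : (traceForm m).re ≤ (traceForm (‖b‖⁻¹ • b)).re := hmin hmem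
      rw [htr] at hle
      have : (traceForm m).re ≤ ‖b‖⁻¹ * (traceForm b).re := by
        simpa [Complex.smul_re] using hle
      calc (traceForm m).re * ‖b‖ ≤ (‖b‖⁻¹ * (traceForm b).re) * ‖b‖ := by nlinarith
      _ = (traceForm b).re := by field_simp
  · refine ⟨1, one_pos, fun b hb => ?_⟩
    have hb0 : b = 0 := by
      by_contra hbne
      exact hne ⟨‖b‖⁻¹ • b, smul_nonneg (by positivity) hb, by
        rw [norm_smul]; simp [norm_ne_zero_iff.mpr hbne]⟩
    simp [hb0]

end TraceFunctional

section Synonym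

variable (B H : Type*) [CStarAlgebra B] [PartialOrder B] [StarOrderedRing B]
  [FiniteDimensional ℂ B]
  [NormedAddCommGroup H] [NormedSpace ℂ H] [Module Bᵐᵒᵖ H] [CStarModuleRight B H]

variable {H} in
lemma smul_eq_op_smul (z : ℂ) (x : H) : z • x = x <• (z • (1 : B)) := by
  have h : ∀ y : H, (inner B y (z • x - x <• (z • (1 : B))) : B) = 0 := fun y => by
    rw [CStarModuleRight.inner_sub_right, CStarModuleRight.inner_smul_right_complex,
      CStarModuleRight.inner_op_smul_right, mul_smul_comm, mul_one, sub_self]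
  rw [← sub_eq_zero]
  exact CStarModuleRight.inner_self.mp (h _)

/-- The complex inner product structure coming from the trace functional. -/
@[reducible]
noncomputable def traceCore : InnerProductSpace.Core ℂ H where
  inner x y := traceForm (inner B x y : B)
  conj_inner_symm x y := by
    show (starRingEnd ℂ) (traceForm (inner B y x : B)) = traceForm (inner B x y : B)
    rw [← traceForm_star, CStarModuleRight.star_inner]
  re_inner_nonneg x := by
    show 0 ≤ (traceForm (inner B x x : B)).re
    have h := traceForm_nonneg (B := B) (CStarModuleRight.inner_self_nonneg (x := x))
    simpa using (Complex.le_def.mp h).1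
  add_left x y z := by
    show traceForm (inner B (x + y) z : B) = traceForm (inner B x z : B) + traceForm (inner B y z : B)
    rw [CStarModuleRight.inner_add_left, map_add]
  smul_left x y r := by
    show traceForm (inner B (r • x) y : B) = (starRingEnd ℂ) r * traceForm (inner B x y : B)
    rw [CStarModuleRight.inner_smul_left_complex, map_smul, smul_eq_mul, Complex.star_def]
  definite x h := by
    have h0 : (inner B x x : B) = 0 :=
      (traceForm_eq_zero_iff (CStarModuleRight.inner_self_nonneg (x := x))).mp h
    exact CStarModuleRight.inner_self.mp h0

/-- Type synonym of `H` carrying the trace inner-product space structure. -/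
def TraceSyn (B H : Type*) : Type _ := H

instance : AddCommGroup (TraceSyn B H) := inferInstanceAs (AddCommGroup H)
instance : Module ℂ (TraceSyn B H) := inferInstanceAs (Module ℂ H)
noncomputable instance : NormedAddCommGroup (TraceSyn B H) :=
  (traceCore B H).toNormedAddCommGroup
noncomputable instance : InnerProductSpace ℂ (TraceSyn B H) :=
  InnerProductSpace.ofCore (traceCore B H).toCore

variable {B H} in
lemma csmul_mem_of_mem (K : Submodule Bᵐᵒᵖ H) (z : ℂ) {x : H} (hx : x ∈ K) : z • x ∈ K := by
  rw [smul_eq_op_smul (B := B) z x]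
  exact K.smul_mem (MulOpposite.op (z • (1 : B))) hx

/-- The identity, as a linear equivalence `H ≃ₗ[ℂ] TraceSyn B H`. -/
def toSyn : H ≃ₗ[ℂ] TraceSyn B H := LinearEquiv.refl ℂ H

lemma inner_syn (x y : H) : ⟪toSyn B H x, toSyn B H y⟫_ℂ = traceForm (inner B x y : B) := rfl

lemma norm_syn_sq (x : H) : ‖toSyn B H x‖ ^ 2 = (traceForm (inner B x x : B)).re := by
  have : ‖toSyn B H x‖ = Real.sqrt (Complex.re (traceForm (inner B x x : B))) := rfl
  rw [this, Real.sq_sqrt]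
  have h := traceForm_nonneg (B := B) (CStarModuleRight.inner_self_nonneg (x := x))
  simpa using (Complex.le_def.mp h).1


lemma norm_syn_le : ∃ C : ℝ, 0 < C ∧ ∀ x : H, ‖toSyn B H x‖ ≤ C * ‖x‖ := by
  obtain ⟨C, hC, hbound⟩ := traceForm_upper (B := B)
  refine ⟨Real.sqrt C, Real.sqrt_pos.mpr hC, fun x => ?_⟩
  have h1 : ‖toSyn B H x‖ ^ 2 ≤ C * ‖x‖ ^ 2 := by
    rw [norm_syn_sq]
    calc (traceForm (inner B x x : B)).re ≤ ‖traceForm (inner B x x : B)‖ := by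
          exact Complex.re_le_norm _
    _ ≤ C * ‖(inner B x x : B)‖ := hbound _
    _ = C * ‖x‖ ^ 2 := by rw [CStarModuleRight.norm_sq_eq (A := B)]
  have h2 : (Real.sqrt C * ‖x‖) ^ 2 = C * ‖x‖ ^ 2 := by
    rw [mul_pow, Real.sq_sqrt hC.le]
  exact (pow_le_pow_iff_left₀ (norm_nonneg _)
    (by positivity : (0:ℝ) ≤ Real.sqrt C * ‖x‖) two_ne_zero).mp (by rw [h2]; exact h1)

lemma le_norm_syn : ∃ c : ℝ, 0 < c ∧ ∀ x : H, ‖x‖ ≤ c * ‖toSyn B H x‖ := by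
  obtain ⟨c, hc, hbound⟩ := traceForm_lower (B := B)
  refine ⟨(Real.sqrt c)⁻¹, by positivity, fun x => ?_⟩
  have h1 : c * ‖x‖ ^ 2 ≤ ‖toSyn B H x‖ ^ 2 := by
    rw [norm_syn_sq, CStarModuleRight.norm_sq_eq (A := B)]
    exact hbound _ (CStarModuleRight.inner_self_nonneg (x := x))
  have h3 : Real.sqrt c * ‖x‖ ≤ ‖toSyn B H x‖ :=
    (pow_le_pow_iff_left₀ (by positivity : (0:ℝ) ≤ Real.sqrt c * ‖x‖) (norm_nonneg _)
      two_ne_zero).mp (by rw [mul_pow, Real.sq_sqrt hc.le]; exact h1)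
  rw [inv_mul_eq_div, le_div_iff₀' (Real.sqrt_pos.mpr hc)]
  exact h3

/-- The identity `H ≃L[ℂ] TraceSyn B H`. -/
noncomputable def synCLE : H ≃L[ℂ] TraceSyn B H := by
  refine (toSyn B H).toContinuousLinearEquivOfBounds (norm_syn_le B H).choose
    (le_norm_syn B H).choose (norm_syn_le B H).choose_spec.2 fun x => ?_
  exact (le_norm_syn B H).choose_spec.2 ((toSyn B H).symm x)

noncomputable instance [CompleteSpace H] : CompleteSpace (TraceSyn B H) := by
  obtain ⟨c, hc, hbound⟩ := le_norm_syn B H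
  have he : IsUniformEmbedding ((synCLE B H : H →L[ℂ] TraceSyn B H)) := by
    refine ContinuousLinearMap.isUniformEmbedding_of_bound _ (K := ⟨c, hc.le⟩) fun x => ?_
    exact hbound x
  exact (he.isUniformInducing.completeSpace_congr (synCLE B H).surjective).mp ‹_›

end Synonym

/-- A finitely or countably generated closed submodule of a Hilbert C⋆-module over a
finite-dimensional C⋆-algebra is complemented: it is the range of a `B`-linear, contractive,
idempotent, self-adjoint map `P : H → H`. -/
theorem closed_submodule_complemented {B H : Type*}
    [CStarAlgebra B] [PartialOrder B] [StarOrderedRing B] [FiniteDimensional ℂ B]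
    [NormedAddCommGroup H] [NormedSpace ℂ H] [Module Bᵐᵒᵖ H] [CStarModuleRight B H]
    [CompleteSpace H]
    (K : Submodule Bᵐᵒᵖ H) (hKclosed : IsClosed (K : Set H))
    (hKgen : ∃ X : Set H, X.Countable ∧
      closure ((Submodule.span Bᵐᵒᵖ X : Submodule Bᵐᵒᵖ H) : Set H) = (K : Set H)) :
    ∃ P : H → H,
      (∀ x y : H, P (x + y) = P x + P y) ∧
      (∀ (h : H) (b : B), P (h <• b) = P h <• b) ∧
      (∀ h : H, ‖P h‖ ≤ ‖h‖) ∧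
      (∀ h : H, P (P h) = P h) ∧
      (∀ x y : H, ⟪P x, y⟫_B = ⟪x, P y⟫_B) ∧
      Set.range P = (K : Set H) := by
  clear hKgen
  set e := toSyn B H with he
  -- the submodule, as a complex subspace of the synonym
  set KE : Submodule ℂ (TraceSyn B H) :=
    { carrier := (K : Set H)
      add_mem' := fun ha hb => K.add_mem ha hb
      zero_mem' := K.zero_mem
      smul_mem' := fun z x hx => csmul_mem_of_mem K z hx } with hKE
  have hKEclosed : IsClosed (KE : Set (TraceSyn B H)) := by
    have h1 : (KE : Set (TraceSyn B H)) = (synCLE B H).symm ⁻¹' (K : Set H) := rfl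
    rw [h1]
    exact hKclosed.preimage (synCLE B H).symm.continuous
  haveI : CompleteSpace KE := hKEclosed.completeSpace_coe
  haveI := Submodule.HasOrthogonalProjection.ofCompleteSpace (K := KE)
  set P0 := Submodule.orthogonalProjectionOnto KE with hP0
  set P : H → H := fun h => e.symm (P0 (e h)) with hP
  have hmem : ∀ h : H, P h ∈ K := fun h => (P0 (e h)).2
  have horth : ∀ h : H, e h - e (P h) ∈ KEᗮ := by
    intro h
    have := Submodule.sub_starProjection_mem_orthogonal (K := KE) (e h)
    have h2 : e (P h) = (P0 (e h) : TraceSyn B H) := by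
      simp [hP, he]
    rw [h2]
    exact this
  -- the key B-valued orthogonality
  have key : ∀ k : H, k ∈ K → ∀ m : TraceSyn B H, m ∈ KEᗮ →
      ⟪k, (e.symm m : H)⟫_B = 0 := by
    intro k hk m hm
    set a : B := ⟪k, (e.symm m : H)⟫_B with ha
    have h1 : traceForm (star a * a) = 0 := by
      have hkc : e (k <• a) ∈ KE := K.smul_mem (MulOpposite.op a) hk
      have h2 := (Submodule.mem_orthogonal KE m).mp hm (e (k <• a)) hkc
      have h3 : (inner ℂ (e (k <• a)) m : ℂ) = traceForm (star a * a) := by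
        have : (inner ℂ (e (k <• a)) m : ℂ) = traceForm (⟪(k <• a : H), (e.symm m : H)⟫_B) := rfl
        rw [this, CStarModuleRight.inner_op_smul_left]
      rw [← h3]; exact h2
    have h4 : star a * a = 0 :=
      (traceForm_eq_zero_iff (star_mul_self_nonneg a)).mp h1
    exact CStarRing.star_mul_self_eq_zero_iff a |>.mp h4
  -- orthogonal complement is stable under the right action
  have orthsmul : ∀ m : TraceSyn B H, m ∈ KEᗮ → ∀ b : B,
      e ((e.symm m : H) <• b) ∈ KEᗮ := by
    intro m hm b
    refine (Submodule.mem_orthogonal _ _).mpr ?_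
    intro u hu
    have h1 : (inner ℂ u (e ((e.symm m : H) <• b)) : ℂ)
        = traceForm (⟪(e.symm u : H), ((e.symm m : H) <• b)⟫_B) := rfl
    refine h1.trans ?_
    rw [CStarModuleRight.inner_op_smul_right, key (e.symm u) hu m hm, zero_mul, map_zero]
  -- a characterization of P
  have hchar : ∀ (h : H) (v : H), v ∈ K → e h - e v ∈ KEᗮ → P h = v := by
    intro h v hv horthv
    have := Submodule.eq_starProjection_of_mem_orthogonal (K := KE) (u := e h) (v := e v) hv horthv
    have h2 : P h = e.symm (P0 (e h) : TraceSyn B H) := rfl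
    rw [h2, show (P0 (e h) : TraceSyn B H) = e v from this]
    simp [he]
  -- inner products against orthogonal complement vanish
  have keyH : ∀ k : H, k ∈ K → ∀ h : H, ⟪k, h - P h⟫_B = 0 := by
    intro k hk h
    have h1 := key k hk (e h - e (P h)) (horth h)
    have h2 : (e.symm (e h - e (P h)) : H) = h - P h := by simp [he]
    rwa [h2] at h1
  have hPidem : ∀ v : H, v ∈ K → P v = v := fun v hv =>
    hchar v v hv (by simp only [sub_self]; exact Submodule.zero_mem _)
  refine ⟨P, ?_, ?_, ?_, ?_, ?_, ?_⟩
  · intro x y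
    refine hchar (x + y) (P x + P y) (K.add_mem (hmem x) (hmem y)) ?_
    have h3 : e (x + y) - e (P x + P y) = (e x - e (P x)) + (e y - e (P y)) := by
      simp only [map_add]; abel
    rw [h3]
    exact Submodule.add_mem _ (horth x) (horth y)
  · intro h b
    refine hchar (h <• b) (P h <• b) (K.smul_mem (MulOpposite.op b) (hmem h)) ?_
    have h1 := orthsmul (e h - e (P h)) (horth h) b
    have h2 : (e.symm (e h - e (P h)) : H) = h - P h := by simp [he]
    rw [h2] at h1
    have h3 : (h - P h) <• b = (h <• b) - (P h <• b) := smul_sub (MulOpposite.op b) h (P h)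
    rw [h3, map_sub] at h1
    exact h1
  · intro h
    have h0 : ⟪P h, h - P h⟫_B = 0 := keyH (P h) (hmem h) h
    rw [CStarModuleRight.inner_sub_right, sub_eq_zero] at h0
    have h1 : ‖P h‖ ^ 2 = ‖⟪P h, P h⟫_B‖ := CStarModuleRight.norm_sq_eq
    rw [← h0] at h1
    have h2 : ‖⟪P h, h⟫_B‖ ≤ ‖P h‖ * ‖h‖ := CStarModuleRight.norm_inner_le H
    nlinarith [norm_nonneg (P h), norm_nonneg h]
  · intro h
    exact hPidem (P h) (hmem h)
  · intro x y
    have h1 : ⟪P x, y⟫_B = ⟪P x, P y⟫_B := by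
      have := keyH (P x) (hmem x) y
      rw [CStarModuleRight.inner_sub_right, sub_eq_zero] at this
      exact this
    have h2 : ⟪x, P y⟫_B = ⟪P x, P y⟫_B := by
      have h4 : ⟪x - P x, P y⟫_B = 0 := by
        rw [← CStarModuleRight.star_inner, keyH (P y) (hmem y) x, star_zero]
      rw [CStarModuleRight.inner_sub_left, sub_eq_zero] at h4
      exact h4
    rw [h1, h2]
  · apply Set.eq_of_subset_of_subset
    · rintro - ⟨h, rfl⟩
      exact hmem h
    · intro k hk
      exact ⟨k, hPidem k hk⟩

end
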